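/- arXiv:2211.00329 — 11 statements merged into one kernel-verified Lean document; each statement's English description precedes it below -/
import Mathlib

section
/- Fix p ≥ 3. Let γ = (λ_2,…,λ_p, σ², φ_1,…,φ_p) and γ̃ = (λ̃_2,…,λ̃_p, σ̃², φ̃_1,…,φ̃_p) be two one-factor parameter vectors with σ² > 0 and σ̃² > 0. Suppose there exist distinct indices j, k ∈ {2,…,p} with λ_j ≠ 0 and λ_k ≠ 0. If the implied covariance matrices coincide, Ω(γ) = Ω(γ̃), then γ = γ̃. (Two nonzero factor loadings among λ_2,…,λ_p suffice for identification of the one-factor model.) -/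
/-- Full vector of factor loadings in the one-factor model with `p = m + 3` observed
variables: the first loading is normalized to `1` and the remaining `p − 1` loadings are
`lam`. -/
def fullLoad (m : ℕ) (lam : Fin (m + 2) → ℝ) : Fin (m + 3) → ℝ :=
  Fin.cases 1 lam

/-- The implied covariance matrix `Ω(γ)` of the one-factor model with parameters
`γ = (λ₂,…,λ_p, σ², φ₁,…,φ_p)` (and normalization `λ₁ = 1`):
`Ω(γ)_{jk} = λ_j λ_k σ²` for `j ≠ k` and `Ω(γ)_{jj} = λ_j² σ² + φ_j`. -/
def OmegaMat (m : ℕ) (lam : Fin (m + 2) → ℝ) (σ2 : ℝ) (φ : Fin (m + 3) → ℝ) :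
    Matrix (Fin (m + 3)) (Fin (m + 3)) ℝ :=
  fun j k =>
    if j = k then (fullLoad m lam j) ^ 2 * σ2 + φ j
    else fullLoad m lam j * fullLoad m lam k * σ2

/-- In the one-factor model with `p = m + 3 ≥ 3` observed variables, if
the parameter vector `γ` has positive factor variance and at least two nonzero factor
loadings among `λ₂,…,λ_p`, then `γ` is identified: any other parameter vector `γ̃` with
positive factor variance and the same implied covariance matrix must equal `γ`. -/
theorem oneFactor_identified (m : ℕ)
    (lam lam' : Fin (m + 2) → ℝ) (σ2 σ2' : ℝ) (φ φ' : Fin (m + 3) → ℝ)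
    (hσ : 0 < σ2) (hσ' : 0 < σ2')
    (htwo : ∃ j k : Fin (m + 2), j ≠ k ∧ lam j ≠ 0 ∧ lam k ≠ 0)
    (hΩ : OmegaMat m lam σ2 φ = OmegaMat m lam' σ2' φ') :
    lam = lam' ∧ σ2 = σ2' ∧ φ = φ' := by
  obtain ⟨j, k, hjk, hj, hk⟩ := htwo
  have key : ∀ i : Fin (m + 2), lam i * σ2 = lam' i * σ2' := by
    intro i
    have h := congrFun (congrFun hΩ 0) i.succ
    simpa [OmegaMat, fullLoad, (Fin.succ_ne_zero i).symm] using h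
  have cross : lam j * lam k * σ2 = lam' j * lam' k * σ2' := by
    have hne : j.succ ≠ k.succ := fun h => hjk (Fin.succ_injective _ h)
    have h := congrFun (congrFun hΩ j.succ) k.succ
    simpa [OmegaMat, fullLoad, hne] using h
  have hA : lam j * lam k * σ2 ≠ 0 :=
    mul_ne_zero (mul_ne_zero hj hk) hσ.ne'
  have hmul : (lam j * lam k * σ2) * σ2 = (lam j * lam k * σ2) * σ2' := by
    calc (lam j * lam k * σ2) * σ2 = (lam j * σ2) * (lam k * σ2) := by ring
      _ = (lam' j * σ2') * (lam' k * σ2') := by rw [key j, key k]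
      _ = (lam' j * lam' k * σ2') * σ2' := by ring
      _ = (lam j * lam k * σ2) * σ2' := by rw [← cross]
  have hσeq : σ2 = σ2' := mul_left_cancel₀ hA hmul
  have hlam : lam = lam' := by
    funext i
    have h := key i
    rw [← hσeq] at h
    exact mul_right_cancel₀ hσ.ne' h
  refine ⟨hlam, hσeq, ?_⟩
  funext i
  have h := congrFun (congrFun hΩ i) i
  simp only [OmegaMat, hlam, hσeq, eq_self_iff_true, if_true] at h
  linarith
end

section
/- Fix p ≥ 3 and an index j₀ ∈ {2,…,p}. Let γ = (λ_2,…,λ_p, σ², φ_1,…,φ_p) be a one-factor parameter vector with σ² > 0, φ_1 > 0, φ_{j₀} > 0, and λ_j = 0 for every j ∈ {2,…,p} with j ≠ j₀ (at most one nonzero loading). Then for every real s with λ_{j₀}²σ⁴/(λ_{j₀}²σ² + φ_{j₀}) < s < σ² + φ_1, the parameter vector γ̃ defined by σ̃² = s, λ̃_{j₀} = λ_{j₀}σ²/s, λ̃_j = 0 for j ∉ {1, j₀}, φ̃_1 = σ² + φ_1 − s, φ̃_{j₀} = λ_{j₀}²σ² + φ_{j₀} − λ_{j₀}²σ⁴/s,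 and φ̃_j = φ_j otherwise, satisfies σ̃² > 0, φ̃_1 > 0, φ̃_{j₀} > 0, and Ω(γ̃) = Ω(γ). In particular, for s ≠ σ² the vectors γ̃ ≠ γ are observationally equivalent, so γ is not identified. -/
/-- In the one-factor model with `p = m + 3 ≥ 3` observed variables,
suppose `γ` has `σ² > 0`, `φ₁ > 0`, `φ_{j₀} > 0`, and at most one nonzero loading
(`λ_j = 0` for all `j ≠ j₀` in `{2,…,p}`). Then for every `s` with
`λ_{j₀}²σ⁴/(λ_{j₀}²σ² + φ_{j₀}) < s < σ² + φ₁`, the parameter vector `γ̃` defined by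
`σ̃² = s`, `λ̃_{j₀} = λ_{j₀}σ²/s`, `λ̃_j = 0` otherwise, `φ̃₁ = σ² + φ₁ − s`,
`φ̃_{j₀} = λ_{j₀}²σ² + φ_{j₀} − λ_{j₀}²σ⁴/s`, `φ̃_j = φ_j` otherwise, satisfies
`σ̃² > 0`, `φ̃₁ > 0`, `φ̃_{j₀} > 0`, and `Ω(γ̃) = Ω(γ)`; moreover `γ̃ ≠ γ` whenever
`s ≠ σ²`, so `γ` is not identified. -/
theorem oneFactor_not_identified (m : ℕ) (j₀ : Fin (m + 2))
    (lam : Fin (m + 2) → ℝ) (σ2 : ℝ) (φ : Fin (m + 3) → ℝ)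
    (hσ : 0 < σ2) (hφ1 : 0 < φ 0) (hφj : 0 < φ j₀.succ)
    (hzero : ∀ j : Fin (m + 2), j ≠ j₀ → lam j = 0)
    (s : ℝ)
    (hs_lo : lam j₀ ^ 2 * σ2 ^ 2 / (lam j₀ ^ 2 * σ2 + φ j₀.succ) < s)
    (hs_hi : s < σ2 + φ 0) :
    let lam' : Fin (m + 2) → ℝ := fun j => if j = j₀ then lam j₀ * σ2 / s else 0
    let φ' : Fin (m + 3) → ℝ := fun j =>
      if j = 0 then σ2 + φ 0 - s
      else if j = j₀.succ then lam j₀ ^ 2 * σ2 + φ j₀.succ - lam j₀ ^ 2 * σ2 ^ 2 / s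
      else φ j
    0 < s ∧ 0 < φ' 0 ∧ 0 < φ' j₀.succ ∧
      OmegaMat m lam' s φ' = OmegaMat m lam σ2 φ ∧
      (s ≠ σ2 → (lam', s, φ') ≠ (lam, σ2, φ)) := by
  intro lam' φ'
  have hden : 0 < lam j₀ ^ 2 * σ2 + φ j₀.succ := by positivity
  have hs0 : 0 < s :=
    lt_of_le_of_lt (by positivity) hs_lo
  have hsne : s ≠ 0 := ne_of_gt hs0
  have hφ'0 : 0 < φ' 0 := by
    show (0:ℝ) < if (0 : Fin (m+3)) = 0 then σ2 + φ 0 - s else _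
    rw [if_pos rfl]
    linarith
  have hsucc0 : (j₀.succ : Fin (m+3)) ≠ 0 := Fin.succ_ne_zero j₀
  have hmul : lam j₀ ^ 2 * σ2 ^ 2 < s * (lam j₀ ^ 2 * σ2 + φ j₀.succ) :=
    (div_lt_iff₀ hden).mp hs_lo
  have hφ'j : 0 < φ' j₀.succ := by
    show (0:ℝ) < if j₀.succ = 0 then _ else if j₀.succ = j₀.succ then
      lam j₀ ^ 2 * σ2 + φ j₀.succ - lam j₀ ^ 2 * σ2 ^ 2 / s else _
    rw [if_neg hsucc0, if_pos rfl]
    have : lam j₀ ^ 2 * σ2 ^ 2 / s < lam j₀ ^ 2 * σ2 + φ j₀.succ := by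
      rw [div_lt_iff₀ hs0]
      nlinarith
    linarith
  refine ⟨hs0, hφ'0, hφ'j, ?_, ?_⟩
  · funext j k
    have hload' : ∀ i : Fin (m+2), fullLoad m lam' i.succ = lam' i := fun i => rfl
    have hload : ∀ i : Fin (m+2), fullLoad m lam i.succ = lam i := fun i => rfl
    have hload0' : fullLoad m lam' 0 = 1 := rfl
    have hload0 : fullLoad m lam 0 = 1 := rfl
    have hlam : ∀ i : Fin (m+2), lam i = if i = j₀ then lam j₀ else 0 := by
      intro i
      by_cases h : i = j₀ <;> simp [h, hzero i]
    induction j using Fin.cases with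
    | zero =>
      induction k using Fin.cases with
      | zero =>
        show (if (0:Fin (m+3)) = 0 then fullLoad m lam' 0 ^ 2 * s + φ' 0
            else fullLoad m lam' 0 * fullLoad m lam' 0 * s) =
          (if (0:Fin (m+3)) = 0 then fullLoad m lam 0 ^ 2 * σ2 + φ 0
            else fullLoad m lam 0 * fullLoad m lam 0 * σ2)
        rw [if_pos rfl, if_pos rfl, hload0, hload0']
        show 1 ^ 2 * s + (if (0:Fin (m+3)) = 0 then σ2 + φ 0 - s else _) = _
        rw [if_pos rfl]; ring
      | succ k =>
        have hne : (0 : Fin (m+3)) ≠ k.succ := (Fin.succ_ne_zero k).symm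
        simp only [OmegaMat, if_neg hne, hload0, hload0', hload, hload']
        show 1 * (if k = j₀ then lam j₀ * σ2 / s else 0) * s = 1 * lam k * σ2
        by_cases h : k = j₀
        · subst h; rw [if_pos rfl]; field_simp
        · rw [if_neg h, hzero k h]; ring
    | succ j =>
      induction k using Fin.cases with
      | zero =>
        have hne : (j.succ : Fin (m+3)) ≠ 0 := Fin.succ_ne_zero j
        simp only [OmegaMat, if_neg hne, hload0, hload0', hload, hload']
        show (if j = j₀ then lam j₀ * σ2 / s else 0) * 1 * s = lam j * 1 * σ2
        by_cases h : j = j₀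
        · subst h; rw [if_pos rfl]; field_simp
        · rw [if_neg h, hzero j h]; ring
      | succ k =>
        by_cases hjk : j = k
        · subst hjk
          simp only [OmegaMat, if_pos rfl, hload, hload']
          show (if j = j₀ then lam j₀ * σ2 / s else 0) ^ 2 * s +
            (if j.succ = 0 then _ else if (j.succ : Fin (m+3)) = j₀.succ then
              lam j₀ ^ 2 * σ2 + φ j₀.succ - lam j₀ ^ 2 * σ2 ^ 2 / s else φ j.succ)
            = lam j ^ 2 * σ2 + φ j.succ
          rw [if_neg (Fin.succ_ne_zero j)]
          by_cases h : j = j₀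
          · subst h
            rw [if_pos rfl, if_pos rfl]
            field_simp
            ring
          · rw [if_neg h, if_neg (fun hc => h (Fin.succ_injective _ hc)), hzero j h]
            ring
        · have hne : (j.succ : Fin (m+3)) ≠ k.succ := fun hc => hjk (Fin.succ_injective _ hc)
          simp only [OmegaMat, if_neg hne, hload, hload']
          show (if j = j₀ then lam j₀ * σ2 / s else 0) *
              (if k = j₀ then lam j₀ * σ2 / s else 0) * s = lam j * lam k * σ2
          by_cases hj : j = j₀
          · have hk : k ≠ j₀ := fun hc => hjk (hj.trans hc.symm)
            rw [if_neg hk, hzero k hk]; ring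
          · rw [if_neg hj, hzero j hj]; ring
  · intro hne heq
    exact hne (congrArg (fun t => t.2.1) heq)
end

section
/- Let σ₁², σ₂², σ₁₂ be real numbers with detΣ := σ₁²σ₂² − σ₁₂² ≠ 0, let β := σ₂², let λ₃ = (λ_{31}, λ_{32}), λ₄ = (λ_{41}, λ_{42}) ∈ ℝ², and define ρ_{j1}, ρ_{j2} (j ∈ {3,4}) and χ as in the two-factor reparameterization. If λ_{41} ≠ 0, then λ_{31} = (χβ − ρ_{42}ρ_{32})/(βρ_{41} − σ₁₂ρ_{42}) and λ_{32} = (ρ_{32}ρ_{41} − χσ₁₂)/(βρ_{41} − σ₁₂ρ_{42}), where the denominators are nonzero. Symmetrically, if λ_{31} ≠ 0, then λ_{41} = (χβ − ρ_{32}ρ_{42})/(βρ_{31} − σ₁₂ρ_{32}) and λ_{42} = (ρ_{42}ρ_{31} − χσ₁₂)/(βρ_{31} − σ₁₂ρ_{32}). -/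
/-- Inverse of Reparameterization 2 for the factor loadings. With
`detΣ = σ₁²σ₂² − σ₁₂² ≠ 0`, `β = σ₂²`, `ρ_{j1} = σ₁²λ_{j1} + σ₁₂λ_{j2}`,
`ρ_{j2} = σ₁₂λ_{j1} + σ₂²λ_{j2}` (for `j = 3, 4`), and `χ = λ₃ᵀΣλ₄`: if `λ₄₁ ≠ 0` then
the denominator `βρ₄₁ − σ₁₂ρ₄₂` is nonzero and
`λ₃₁ = (χβ − ρ₄₂ρ₃₂)/(βρ₄₁ − σ₁₂ρ₄₂)`, `λ₃₂ = (ρ₃₂ρ₄₁ − χσ₁₂)/(βρ₄₁ − σ₁₂ρ₄₂)`;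
symmetrically if `λ₃₁ ≠ 0`. Here `s1 = σ₁²`, `s2 = σ₂²`, `s12 = σ₁₂`. -/
theorem two_factor_loading_inverse
    (s1 s2 s12 β l31 l32 l41 l42 ρ31 ρ32 ρ41 ρ42 χ : ℝ)
    (hdet : s1 * s2 - s12 ^ 2 ≠ 0) (hβ : β = s2)
    (h31 : ρ31 = s1 * l31 + s12 * l32) (h32 : ρ32 = s12 * l31 + s2 * l32)
    (h41 : ρ41 = s1 * l41 + s12 * l42) (h42 : ρ42 = s12 * l41 + s2 * l42)
    (hχ : χ = s1 * l31 * l41 + s12 * (l31 * l42 + l32 * l41) + s2 * l32 * l42) :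
    (l41 ≠ 0 →
      β * ρ41 - s12 * ρ42 ≠ 0 ∧
      l31 = (χ * β - ρ42 * ρ32) / (β * ρ41 - s12 * ρ42) ∧
      l32 = (ρ32 * ρ41 - χ * s12) / (β * ρ41 - s12 * ρ42)) ∧
    (l31 ≠ 0 →
      β * ρ31 - s12 * ρ32 ≠ 0 ∧
      l41 = (χ * β - ρ32 * ρ42) / (β * ρ31 - s12 * ρ32) ∧
      l42 = (ρ42 * ρ31 - χ * s12) / (β * ρ31 - s12 * ρ32)) := by
  subst hβ h31 h32 h41 h42 hχ
  constructor
  · intro h41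
    have hden : β * (s1 * l41 + s12 * l42) - s12 * (s12 * l41 + β * l42)
        = (s1 * β - s12 ^ 2) * l41 := by ring
    have hne : β * (s1 * l41 + s12 * l42) - s12 * (s12 * l41 + β * l42) ≠ 0 := by
      rw [hden]; exact mul_ne_zero hdet h41
    refine ⟨hne, ?_, ?_⟩ <;> rw [eq_div_iff hne] <;> ring
  · intro h31
    have hden : β * (s1 * l31 + s12 * l32) - s12 * (s12 * l31 + β * l32)
        = (s1 * β - s12 ^ 2) * l31 := by ring
    have hne : β * (s1 * l31 + s12 * l32) - s12 * (s12 * l31 + β * l32) ≠ 0 := by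
      rw [hden]; exact mul_ne_zero hdet h31
    refine ⟨hne, ?_, ?_⟩ <;> rw [eq_div_iff hne] <;> ring
end

section
/- Let σ₁², σ₂², σ₁₂ be real numbers with detΣ := σ₁²σ₂² − σ₁₂² ≠ 0, let β := σ₂², let λ₃ = (λ_{31}, λ_{32}), λ₄ = (λ_{41}, λ_{42}) ∈ ℝ² with λ_{31} ≠ 0 and λ_{41} ≠ 0, and define ρ_{j1}, ρ_{j2} (j ∈ {3,4}) and χ as in the two-factor reparameterization. Then χβ − ρ_{42}ρ_{32} = detΣ · λ_{31}λ_{41} ≠ 0 and σ₁² = [ρ_{31}(βρ_{41} − σ₁₂ρ_{42}) − σ₁₂(ρ_{32}ρ_{41} − χσ₁₂)] / (χβ − ρ_{42}ρ_{32}). -/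
/-- Inverse of Reparameterization 2 for the variance of the first factor.
With `detΣ = σ₁²σ₂² − σ₁₂² ≠ 0`, `β = σ₂²`, `λ₃₁ ≠ 0`, `λ₄₁ ≠ 0`,
`ρ_{j1} = σ₁²λ_{j1} + σ₁₂λ_{j2}`, `ρ_{j2} = σ₁₂λ_{j1} + σ₂²λ_{j2}` (for `j = 3, 4`), and
`χ = λ₃ᵀΣλ₄`: one has `χβ − ρ₄₂ρ₃₂ = detΣ · λ₃₁λ₄₁ ≠ 0` and
`σ₁² = [ρ₃₁(βρ₄₁ − σ₁₂ρ₄₂) − σ₁₂(ρ₃₂ρ₄₁ − χσ₁₂)] / (χβ − ρ₄₂ρ₃₂)`.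
Here `s1 = σ₁²`, `s2 = σ₂²`, `s12 = σ₁₂`. -/
theorem two_factor_sigma1_inverse
    (s1 s2 s12 β l31 l32 l41 l42 ρ31 ρ32 ρ41 ρ42 χ : ℝ)
    (hdet : s1 * s2 - s12 ^ 2 ≠ 0) (hβ : β = s2)
    (hl31 : l31 ≠ 0) (hl41 : l41 ≠ 0)
    (h31 : ρ31 = s1 * l31 + s12 * l32) (h32 : ρ32 = s12 * l31 + s2 * l32)
    (h41 : ρ41 = s1 * l41 + s12 * l42) (h42 : ρ42 = s12 * l41 + s2 * l42)
    (hχ : χ = s1 * l31 * l41 + s12 * (l31 * l42 + l32 * l41) + s2 * l32 * l42) :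
    χ * β - ρ42 * ρ32 = (s1 * s2 - s12 ^ 2) * (l31 * l41) ∧
    χ * β - ρ42 * ρ32 ≠ 0 ∧
    s1 = (ρ31 * (β * ρ41 - s12 * ρ42) - s12 * (ρ32 * ρ41 - χ * s12)) /
          (χ * β - ρ42 * ρ32) := by
  have h1 : χ * β - ρ42 * ρ32 = (s1 * s2 - s12 ^ 2) * (l31 * l41) := by
    subst hβ h32 h42 hχ; ring
  have h2 : χ * β - ρ42 * ρ32 ≠ 0 := by
    rw [h1]; exact mul_ne_zero hdet (mul_ne_zero hl31 hl41)
  refine ⟨h1, h2, ?_⟩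
  rw [eq_div_iff h2, h1]
  subst hβ h31 h32 h41 h42 hχ; ring
end

section
/- Fix p ≥ 4. Consider two-factor parameter vectors γ = (λ₃,…,λ_p, σ₁², σ₁₂, σ₂², φ₁,…,φ_p), where λ_j ∈ ℝ² for j ∈ {3,…,p}, and with λ₁ := (1,0), λ₂ := (0,1), restricted to the set where Σ = [[σ₁², σ₁₂],[σ₁₂, σ₂²]] is positive definite, λ_{31} ≠ 0, and λ_{41} ≠ 0. Define the map T(γ) := ((ρ_{j1}, ρ_{j2})_{j=3}^p, (ω_j)_{j=1}^p, χ, σ₁₂, β), where ρ_{j1} = σ₁²λ_{j1} + σ₁₂λ_{j2}, ρ_{j2} = σ₁₂λ_{j1} + σ₂²λ_{j2}, ω_j = λ_jᵀΣλ_j + φ_j (with ω₁ = σ₁² + φ₁ and ω₂ = σ₂² + φ₂), χ = λ₃ᵀΣλ₄, and β = σ₂². Then T is injective on this set: if T(γ) = T(γ̃) for two such parameter vectors, then γ = γ̃. -/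
/-- Full matrix of factor loading rows in the two-factor model with `p = m + 4` observed
variables: row 1 is `(1, 0)`, row 2 is `(0, 1)`, and rows 3,…,p are given by `lam`. -/
def fullRows (m : ℕ) (lam : Fin (m + 2) → Fin 2 → ℝ) : Fin (m + 4) → Fin 2 → ℝ :=
  Fin.cases ![1, 0] (Fin.cases ![0, 1] lam)

/-- Quadratic form `vᵀ Σ v` for `Σ = [[s1, s12], [s12, s2]]`. -/
def quadForm (s1 s12 s2 : ℝ) (v : Fin 2 → ℝ) : ℝ :=
  s1 * v 0 ^ 2 + 2 * s12 * v 0 * v 1 + s2 * v 1 ^ 2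

/-- Bilinear form `uᵀ Σ v` for `Σ = [[s1, s12], [s12, s2]]`. -/
def biForm (s1 s12 s2 : ℝ) (u v : Fin 2 → ℝ) : ℝ :=
  s1 * u 0 * v 0 + s12 * (u 0 * v 1 + u 1 * v 0) + s2 * u 1 * v 1

/-- Reparameterization 2 is injective. In the two-factor model with
`p = m + 4 ≥ 4` observed variables, parameters `γ = (λ₃,…,λ_p, σ₁², σ₁₂, σ₂², φ₁,…,φ_p)`
(with normalizations `λ₁ = (1,0)`, `λ₂ = (0,1)`), restricted to `Σ` positive definite,
`λ₃₁ ≠ 0`, `λ₄₁ ≠ 0`, the map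
`T(γ) = ((ρ_{j1}, ρ_{j2})_{j≥3}, (ω_j)_j, χ, σ₁₂, β)` with
`ρ_{j1} = σ₁²λ_{j1} + σ₁₂λ_{j2}`, `ρ_{j2} = σ₁₂λ_{j1} + σ₂²λ_{j2}`,
`ω_j = λ_jᵀΣλ_j + φ_j`, `χ = λ₃ᵀΣλ₄`, `β = σ₂²` is injective: equality of all components
of `T` forces equality of the parameters. Here `lam i` is row `λ_{i+3}` (so `λ₃ = lam 0`,
`λ₄ = lam 1`), and `s1 = σ₁²`, `s12 = σ₁₂`, `s2 = σ₂²`. -/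
theorem two_factor_reparameterization_injective (m : ℕ)
    (lam lam' : Fin (m + 2) → Fin 2 → ℝ)
    (s1 s12 s2 s1' s12' s2' : ℝ)
    (φ φ' : Fin (m + 4) → ℝ)
    (hpd : (Matrix.of ![![s1, s12], ![s12, s2]]).PosDef)
    (hpd' : (Matrix.of ![![s1', s12'], ![s12', s2']]).PosDef)
    (h31 : lam 0 0 ≠ 0) (h41 : lam 1 0 ≠ 0)
    (h31' : lam' 0 0 ≠ 0) (h41' : lam' 1 0 ≠ 0)
    (hρ1 : ∀ j : Fin (m + 2),
      s1 * lam j 0 + s12 * lam j 1 = s1' * lam' j 0 + s12' * lam' j 1)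
    (hρ2 : ∀ j : Fin (m + 2),
      s12 * lam j 0 + s2 * lam j 1 = s12' * lam' j 0 + s2' * lam' j 1)
    (hω : ∀ j : Fin (m + 4),
      quadForm s1 s12 s2 (fullRows m lam j) + φ j =
        quadForm s1' s12' s2' (fullRows m lam' j) + φ' j)
    (hχ : biForm s1 s12 s2 (lam 0) (lam 1) = biForm s1' s12' s2' (lam' 0) (lam' 1))
    (hσ12 : s12 = s12')
    (hβ : s2 = s2') :
    lam = lam' ∧ s1 = s1' ∧ s12 = s12' ∧ s2 = s2' ∧ φ = φ' := by
  subst hσ12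
  subst hβ
  -- determinants
  have hdet : 0 < s1 * s2 - s12 * s12 := by
    have := hpd.det_pos
    rw [Matrix.det_fin_two] at this
    simpa using this
  have hdet' : 0 < s1' * s2 - s12 * s12 := by
    have := hpd'.det_pos
    rw [Matrix.det_fin_two] at this
    simpa using this
  set d := s1 * s2 - s12 * s12 with hd_def
  set d' := s1' * s2 - s12 * s12 with hd'_def
  have hdne : d ≠ 0 := ne_of_gt hdet
  have hdne' : d' ≠ 0 := ne_of_gt hdet'
  -- substitution identities for the primed row 3 and row 4
  have hA : d' * lam' 0 0 = d * lam 0 0 := by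
    linear_combination s12 * (hρ2 0) - s2 * (hρ1 0)
  have hB : d' * lam' 1 0 = d * lam 1 0 := by
    linear_combination s12 * (hρ2 1) - s2 * (hρ1 1)
  have hC : d' * lam' 0 1 = s12 * (s1' - s1) * lam 0 0 + d' * lam 0 1 := by
    linear_combination s12 * (hρ1 0) - s1' * (hρ2 0)
  have hD : d' * lam' 1 1 = s12 * (s1' - s1) * lam 1 0 + d' * lam 1 1 := by
    linear_combination s12 * (hρ1 1) - s1' * (hρ2 1)
  -- the key identity from χ
  have hχ' : s1 * lam 0 0 * lam 1 0 + s12 * (lam 0 0 * lam 1 1 + lam 0 1 * lam 1 0)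
      + s2 * lam 0 1 * lam 1 1
      = s1' * lam' 0 0 * lam' 1 0 + s12 * (lam' 0 0 * lam' 1 1 + lam' 0 1 * lam' 1 0)
      + s2 * lam' 0 1 * lam' 1 1 := hχ
  have key : (s1' - s1) * d * d' * (lam 0 0 * lam 1 0) = 0 := by
    linear_combination d' ^ 2 * hχ'
      + s1' * (d' * lam' 1 0) * hA + s1' * (d * lam 0 0) * hB
      + s12 * (d' * lam' 1 1) * hA + s12 * (d * lam 0 0) * hD
      + s12 * (d' * lam' 1 0) * hC
      + s12 * (s12 * (s1' - s1) * lam 0 0 + d' * lam 0 1) * hB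
      + s2 * (d' * lam' 1 1) * hC
      + s2 * (s12 * (s1' - s1) * lam 0 0 + d' * lam 0 1) * hD
  have hs1 : s1 = s1' := by
    rcases mul_eq_zero.1 key with h | h
    · rcases mul_eq_zero.1 h with h' | h'
      · rcases mul_eq_zero.1 h' with h'' | h''
        · linarith [sub_eq_zero.1 h'']
        · exact absurd h'' hdne
      · exact absurd h' hdne'
    · exact absurd h (mul_ne_zero h31 h41)
  subst hs1
  -- now lam = lam'
  have hlam : lam = lam' := by
    funext j i
    have e1 := hρ1 j
    have e2 := hρ2 j
    have h0 : d * (lam j 0 - lam' j 0) = 0 := by linear_combination s2 * e1 - s12 * e2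
    have h1 : d * (lam j 1 - lam' j 1) = 0 := by linear_combination s1 * e2 - s12 * e1
    have h0' : lam j 0 = lam' j 0 := by
      have := (mul_eq_zero.1 h0).resolve_left hdne
      linarith [sub_eq_zero.1 this]
    have h1' : lam j 1 = lam' j 1 := by
      have := (mul_eq_zero.1 h1).resolve_left hdne
      linarith [sub_eq_zero.1 this]
    fin_cases i <;> assumption
  subst hlam
  refine ⟨rfl, rfl, rfl, rfl, ?_⟩
  funext j
  have := hω j
  linarith
end

section
/- Let σ₁², σ₂², σ₁₂ be real numbers with detΣ := σ₁²σ₂² − σ₁₂² ≠ 0, let β := σ₂², let λ₃, λ₄, λ_k ∈ ℝ² with λ_{41} ≠ 0, and define ρ_{j1}, ρ_{j2} for j ∈ {3,4,k} and χ as in the two-factor reparameterization. Then βρ_{41} − σ₁₂ρ_{42} ≠ 0 and λ₃ᵀΣλ_k = [ρ_{32}(ρ_{k2}ρ_{41} − ρ_{k1}ρ_{42}) + χ(βρ_{k1} − σ₁₂ρ_{k2})] / (βρ_{41} − σ₁₂ρ_{42}). That is, the covariance moment τ_{3k} of the factor model equals the function τ_{3k}(π, β) of the reparameterized parameters. -/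
/-- The covariance moment `τ_{3k} = λ₃ᵀΣλ_k` of the two-factor model
equals the reparameterized function `τ_{3k}(π, β)`. With `detΣ = σ₁²σ₂² − σ₁₂² ≠ 0`,
`β = σ₂²`, `λ₄₁ ≠ 0`, `ρ_{j1} = σ₁²λ_{j1} + σ₁₂λ_{j2}`, `ρ_{j2} = σ₁₂λ_{j1} + σ₂²λ_{j2}`
(for `j ∈ {3, 4, k}`), and `χ = λ₃ᵀΣλ₄`: `βρ₄₁ − σ₁₂ρ₄₂ ≠ 0` and
`λ₃ᵀΣλ_k = [ρ₃₂(ρ_{k2}ρ₄₁ − ρ_{k1}ρ₄₂) + χ(βρ_{k1} − σ₁₂ρ_{k2})]/(βρ₄₁ − σ₁₂ρ₄₂)`.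
Here `s1 = σ₁²`, `s2 = σ₂²`, `s12 = σ₁₂`. -/
theorem tau3k_reparameterized
    (s1 s2 s12 β l31 l32 l41 l42 lk1 lk2 ρ31 ρ32 ρ41 ρ42 ρk1 ρk2 χ : ℝ)
    (hdet : s1 * s2 - s12 ^ 2 ≠ 0) (hβ : β = s2) (hl41 : l41 ≠ 0)
    (h31 : ρ31 = s1 * l31 + s12 * l32) (h32 : ρ32 = s12 * l31 + s2 * l32)
    (h41 : ρ41 = s1 * l41 + s12 * l42) (h42 : ρ42 = s12 * l41 + s2 * l42)
    (hk1 : ρk1 = s1 * lk1 + s12 * lk2) (hk2 : ρk2 = s12 * lk1 + s2 * lk2)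
    (hχ : χ = s1 * l31 * l41 + s12 * (l31 * l42 + l32 * l41) + s2 * l32 * l42) :
    β * ρ41 - s12 * ρ42 ≠ 0 ∧
    s1 * l31 * lk1 + s12 * (l31 * lk2 + l32 * lk1) + s2 * l32 * lk2 =
      (ρ32 * (ρk2 * ρ41 - ρk1 * ρ42) + χ * (β * ρk1 - s12 * ρk2)) /
        (β * ρ41 - s12 * ρ42) := by
  have hkey : β * ρ41 - s12 * ρ42 = (s1 * s2 - s12 ^ 2) * l41 := by
    subst hβ h41 h42; ring
  have hne : β * ρ41 - s12 * ρ42 ≠ 0 := by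
    rw [hkey]; exact mul_ne_zero hdet hl41
  refine ⟨hne, ?_⟩
  rw [eq_div_iff hne]
  subst hβ h31 h32 h41 h42 hk1 hk2 hχ
  ring
end

section
/- Let σ₁², σ₂², σ₁₂ be real numbers with detΣ := σ₁²σ₂² − σ₁₂² ≠ 0, let β := σ₂², let λ₃, λ₄, λ_k ∈ ℝ² with λ_{31} ≠ 0, and define ρ_{j1}, ρ_{j2} for j ∈ {3,4,k} and χ as in the two-factor reparameterization. Then βρ_{31} − σ₁₂ρ_{32} ≠ 0 and λ₄ᵀΣλ_k = [ρ_{42}(ρ_{k2}ρ_{31} − ρ_{k1}ρ_{32}) + χ(βρ_{k1} − σ₁₂ρ_{k2})] / (βρ_{31} − σ₁₂ρ_{32}). That is, the covariance moment τ_{4k} of the factor model equals the function τ_{4k}(π, β) of the reparameterized parameters. -/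
/-- The covariance moment `τ_{4k} = λ₄ᵀΣλ_k` of the two-factor model
equals the reparameterized function `τ_{4k}(π, β)`. With `detΣ = σ₁²σ₂² − σ₁₂² ≠ 0`,
`β = σ₂²`, `λ₃₁ ≠ 0`, `ρ_{j1} = σ₁²λ_{j1} + σ₁₂λ_{j2}`, `ρ_{j2} = σ₁₂λ_{j1} + σ₂²λ_{j2}`
(for `j ∈ {3, 4, k}`), and `χ = λ₃ᵀΣλ₄`: `βρ₃₁ − σ₁₂ρ₃₂ ≠ 0` and
`λ₄ᵀΣλ_k = [ρ₄₂(ρ_{k2}ρ₃₁ − ρ_{k1}ρ₃₂) + χ(βρ_{k1} − σ₁₂ρ_{k2})]/(βρ₃₁ − σ₁₂ρ₃₂)`.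
Here `s1 = σ₁²`, `s2 = σ₂²`, `s12 = σ₁₂`. -/
theorem tau4k_reparameterized
    (s1 s2 s12 β l31 l32 l41 l42 lk1 lk2 ρ31 ρ32 ρ41 ρ42 ρk1 ρk2 χ : ℝ)
    (hdet : s1 * s2 - s12 ^ 2 ≠ 0) (hβ : β = s2) (hl31 : l31 ≠ 0)
    (h31 : ρ31 = s1 * l31 + s12 * l32) (h32 : ρ32 = s12 * l31 + s2 * l32)
    (h41 : ρ41 = s1 * l41 + s12 * l42) (h42 : ρ42 = s12 * l41 + s2 * l42)
    (hk1 : ρk1 = s1 * lk1 + s12 * lk2) (hk2 : ρk2 = s12 * lk1 + s2 * lk2)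
    (hχ : χ = s1 * l31 * l41 + s12 * (l31 * l42 + l32 * l41) + s2 * l32 * l42) :
    β * ρ31 - s12 * ρ32 ≠ 0 ∧
    s1 * l41 * lk1 + s12 * (l41 * lk2 + l42 * lk1) + s2 * l42 * lk2 =
      (ρ42 * (ρk2 * ρ31 - ρk1 * ρ32) + χ * (β * ρk1 - s12 * ρk2)) /
        (β * ρ31 - s12 * ρ32) := by
  have hne : β * ρ31 - s12 * ρ32 ≠ 0 := by
    rw [hβ, h31, h32]
    have : s2 * (s1 * l31 + s12 * l32) - s12 * (s12 * l31 + s2 * l32)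
        = (s1 * s2 - s12 ^ 2) * l31 := by ring
    rw [this]
    exact mul_ne_zero hdet hl31
  refine ⟨hne, ?_⟩
  rw [eq_div_iff hne]
  rw [hβ, h42, hk1, hk2, hχ, h31, h32]
  ring
end

section
/- Let σ₁², σ₂², σ₁₂ be real numbers with detΣ := σ₁²σ₂² − σ₁₂² ≠ 0, let β := σ₂², let λ₃, λ₄, λ_j, λ_k ∈ ℝ² with λ_{31} ≠ 0 and λ_{41} ≠ 0, and define ρ_{a1}, ρ_{a2} for a ∈ {3,4,j,k} and χ as in the two-factor reparameterization. Define q := ρ_{31}ρ_{41}ρ_{j2}ρ_{k2} − ρ_{32}ρ_{42}ρ_{j1}ρ_{k1} and r := ρ_{32}ρ_{42}ρ_{j1}ρ_{k2} + ρ_{32}ρ_{42}ρ_{j2}ρ_{k1} − ρ_{31}ρ_{42}ρ_{j2}ρ_{k2} − ρ_{32}ρ_{41}ρ_{j2}ρ_{k2}. Then (βρ_{31} − σ₁₂ρ_{32})(βρ_{41} − σ₁₂ρ_{42}) ≠ 0 and λ_jᵀΣλ_k = [βq + σ₁₂r + χ(βρ_{k1} − σ₁₂ρ_{k2})(βρ_{j1}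 − σ₁₂ρ_{j2})] / [(βρ_{31} − σ₁₂ρ_{32})(βρ_{41} − σ₁₂ρ_{42})]. That is, the covariance moment τ_{jk} of the factor model equals the function τ_{jk}(π, β) of the reparameterized parameters. -/
/-- The covariance moment `τ_{jk} = λ_jᵀΣλ_k` of the two-factor model
equals the reparameterized function `τ_{jk}(π, β)`. With `detΣ = σ₁²σ₂² − σ₁₂² ≠ 0`,
`β = σ₂²`, `λ₃₁ ≠ 0`, `λ₄₁ ≠ 0`, `ρ_{a1} = σ₁²λ_{a1} + σ₁₂λ_{a2}`,
`ρ_{a2} = σ₁₂λ_{a1} + σ₂²λ_{a2}` (for `a ∈ {3, 4, j, k}`), `χ = λ₃ᵀΣλ₄`,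
`q = ρ₃₁ρ₄₁ρ_{j2}ρ_{k2} − ρ₃₂ρ₄₂ρ_{j1}ρ_{k1}`, and
`r = ρ₃₂ρ₄₂ρ_{j1}ρ_{k2} + ρ₃₂ρ₄₂ρ_{j2}ρ_{k1} − ρ₃₁ρ₄₂ρ_{j2}ρ_{k2} − ρ₃₂ρ₄₁ρ_{j2}ρ_{k2}`:
`(βρ₃₁ − σ₁₂ρ₃₂)(βρ₄₁ − σ₁₂ρ₄₂) ≠ 0` and
`λ_jᵀΣλ_k = [βq + σ₁₂r + χ(βρ_{k1} − σ₁₂ρ_{k2})(βρ_{j1} − σ₁₂ρ_{j2})] /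
[(βρ₃₁ − σ₁₂ρ₃₂)(βρ₄₁ − σ₁₂ρ₄₂)]`. Here `s1 = σ₁²`, `s2 = σ₂²`, `s12 = σ₁₂`. -/
theorem taujk_reparameterized
    (s1 s2 s12 β l31 l32 l41 l42 lj1 lj2 lk1 lk2
      ρ31 ρ32 ρ41 ρ42 ρj1 ρj2 ρk1 ρk2 χ q r : ℝ)
    (hdet : s1 * s2 - s12 ^ 2 ≠ 0) (hβ : β = s2)
    (hl31 : l31 ≠ 0) (hl41 : l41 ≠ 0)
    (h31 : ρ31 = s1 * l31 + s12 * l32) (h32 : ρ32 = s12 * l31 + s2 * l32)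
    (h41 : ρ41 = s1 * l41 + s12 * l42) (h42 : ρ42 = s12 * l41 + s2 * l42)
    (hj1 : ρj1 = s1 * lj1 + s12 * lj2) (hj2 : ρj2 = s12 * lj1 + s2 * lj2)
    (hk1 : ρk1 = s1 * lk1 + s12 * lk2) (hk2 : ρk2 = s12 * lk1 + s2 * lk2)
    (hχ : χ = s1 * l31 * l41 + s12 * (l31 * l42 + l32 * l41) + s2 * l32 * l42)
    (hq : q = ρ31 * ρ41 * ρj2 * ρk2 - ρ32 * ρ42 * ρj1 * ρk1)
    (hr : r = ρ32 * ρ42 * ρj1 * ρk2 + ρ32 * ρ42 * ρj2 * ρk1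
              - ρ31 * ρ42 * ρj2 * ρk2 - ρ32 * ρ41 * ρj2 * ρk2) :
    (β * ρ31 - s12 * ρ32) * (β * ρ41 - s12 * ρ42) ≠ 0 ∧
    s1 * lj1 * lk1 + s12 * (lj1 * lk2 + lj2 * lk1) + s2 * lj2 * lk2 =
      (β * q + s12 * r + χ * (β * ρk1 - s12 * ρk2) * (β * ρj1 - s12 * ρj2)) /
        ((β * ρ31 - s12 * ρ32) * (β * ρ41 - s12 * ρ42)) := by
  have hd31 : β * ρ31 - s12 * ρ32 = (s1 * s2 - s12 ^ 2) * l31 := by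
    subst hβ h31 h32; ring
  have hd41 : β * ρ41 - s12 * ρ42 = (s1 * s2 - s12 ^ 2) * l41 := by
    subst hβ h41 h42; ring
  have hne : (β * ρ31 - s12 * ρ32) * (β * ρ41 - s12 * ρ42) ≠ 0 := by
    rw [hd31, hd41]
    exact mul_ne_zero (mul_ne_zero hdet hl31) (mul_ne_zero hdet hl41)
  refine ⟨hne, ?_⟩
  rw [eq_div_iff hne]
  subst hβ hq hr hχ h31 h32 h41 h42 hj1 hj2 hk1 hk2
  ring
end

section
/- Let ρ_{31}, ρ_{32}, ρ_{41}, ρ_{42}, ρ_{k1}, ρ_{k2}, χ, σ₁₂ be real numbers with (ρ_{41}, σ₁₂ρ_{42}) ≠ (0,0), and define τ_{3k}(β) := [ρ_{32}(ρ_{k2}ρ_{41} − ρ_{k1}ρ_{42}) + χ(βρ_{k1} − σ₁₂ρ_{k2})] / (βρ_{41} − σ₁₂ρ_{42}) on the domain D := {β ∈ ℝ : βρ_{41} − σ₁₂ρ_{42} ≠ 0}. Then τ_{3k} is injective on D if and only if (ρ_{k2}ρ_{41} − ρ_{k1}ρ_{42})(ρ_{32}ρ_{41} − χσ₁₂) ≠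 0. Moreover, if (ρ_{k2}ρ_{41} − ρ_{k1}ρ_{42})(ρ_{32}ρ_{41} − χσ₁₂) = 0, then τ_{3k} is constant on D. (Proposition 1, first part: τ_{3k}(π,·) can be inverted for β if and only if (ρ_{k2}ρ_{41} − ρ_{k1}ρ_{42})(ρ_{32}ρ_{41} − χσ₁₂) ≠ 0.) -/
/-! A linear fractional map `x ↦ (a x + b) / (c x + d)` satisfies
`f x = f y ↔ (a d - b c) (x - y) = 0` on its domain, so it is injective exactly when its
determinant `a d - b c` is nonzero and constant otherwise; as soon as `(c, d) ≠ (0, 0)` the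
domain has two points, so "constant" rules out "injective". For `τ_{3k}` the determinant is
`-(ρ_{k2}ρ₄₁ − ρ_{k1}ρ₄₂)(ρ₃₂ρ₄₁ − χσ₁₂)`. -/

section LinearFractional

variable {K : Type*} [Field K]

def linearFractional (a b c d : K) (x : K) : K := (a * x + b) / (c * x + d)

theorem linearFractional_eq_iff {a b c d x y : K} (hx : c * x + d ≠ 0) (hy : c * y + d ≠ 0) :
    linearFractional a b c d x = linearFractional a b c d y ↔ (a * d - b * c) * (x - y) = 0 := by
  rw [linearFractional, linearFractional, div_eq_div_iff hx hy]
  constructor <;> intro h <;> linear_combination h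

theorem linearFractional_eq_of_det_eq_zero {a b c d x y : K} (hdet : a * d - b * c = 0)
    (hx : c * x + d ≠ 0) (hy : c * y + d ≠ 0) :
    linearFractional a b c d x = linearFractional a b c d y :=
  (linearFractional_eq_iff hx hy).2 (by rw [hdet, zero_mul])

theorem subsingleton_setOf_mul_add_eq_zero {c d : K} (h : (c, d) ≠ (0, 0)) :
    {x : K | c * x + d = 0}.Subsingleton := by
  intro x hx y hy
  have hc : c ≠ 0 := by
    rintro rfl
    exact h (by simpa using hx)
  exact mul_left_cancel₀ hc (by linear_combination hx.out - hy.out)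

theorem nontrivial_setOf_mul_add_ne_zero [Infinite K] {c d : K} (h : (c, d) ≠ (0, 0)) :
    {x : K | c * x + d ≠ 0}.Nontrivial :=
  (subsingleton_setOf_mul_add_eq_zero h).finite.infinite_compl.nontrivial

theorem injOn_linearFractional_iff [Infinite K] {a b c d : K} (h : (c, d) ≠ (0, 0)) :
    Set.InjOn (linearFractional a b c d) {x | c * x + d ≠ 0} ↔ a * d - b * c ≠ 0 := by
  constructor
  · intro hinj hdet
    obtain ⟨x, hx, y, hy, hxy⟩ := nontrivial_setOf_mul_add_ne_zero h
    exact hxy (hinj hx hy (linearFractional_eq_of_det_eq_zero hdet hx hy))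
  · intro hdet x hx y hy hxy
    exact sub_eq_zero.1 ((mul_eq_zero.1 ((linearFractional_eq_iff hx hy).1 hxy)).resolve_left hdet)

end LinearFractional

theorem tau3k_invertible_iff_general (ρ32 ρ41 ρ42 ρk1 ρk2 χ s12 : ℝ)
    (h : (ρ41, s12 * ρ42) ≠ (0, 0)) :
    let τ : ℝ → ℝ := fun β =>
      (ρ32 * (ρk2 * ρ41 - ρk1 * ρ42) + χ * (β * ρk1 - s12 * ρk2)) /
        (β * ρ41 - s12 * ρ42)
    let D : Set ℝ := {β | β * ρ41 - s12 * ρ42 ≠ 0}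
    (Set.InjOn τ D ↔ (ρk2 * ρ41 - ρk1 * ρ42) * (ρ32 * ρ41 - χ * s12) ≠ 0) ∧
    ((ρk2 * ρ41 - ρk1 * ρ42) * (ρ32 * ρ41 - χ * s12) = 0 →
      ∀ βh ∈ D, ∀ βt ∈ D, τ βh = τ βt) := by
  intro τ D
  set a := χ * ρk1
  set b := ρ32 * (ρk2 * ρ41 - ρk1 * ρ42) - χ * s12 * ρk2
  set c := ρ41
  set d := -(s12 * ρ42)
  have hτ : τ = linearFractional a b c d := by
    funext β
    simp only [τ, linearFractional, a, b, c, d]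
    congr 1 <;> ring
  have hD : D = {x | c * x + d ≠ 0} := by
    ext β
    simp only [D, Set.mem_ofPred_eq, c, d]
    rw [show β * ρ41 - s12 * ρ42 = ρ41 * β + -(s12 * ρ42) by ring]
  have hdet : a * d - b * c = -((ρk2 * ρ41 - ρk1 * ρ42) * (ρ32 * ρ41 - χ * s12)) := by ring
  have hcd : (c, d) ≠ (0, 0) := by simpa [c, d] using h
  rw [hτ, hD, ← neg_ne_zero, ← neg_eq_zero, ← hdet]
  exact ⟨injOn_linearFractional_iff hcd,
    fun hdet0 _ hx _ hy => linearFractional_eq_of_det_eq_zero hdet0 hx hy⟩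

/-- Proposition 1, first part. With `(ρ₄₁, σ₁₂ρ₄₂) ≠ (0,0)`, the
reparameterized moment function
`τ_{3k}(β) = [ρ₃₂(ρ_{k2}ρ₄₁ − ρ_{k1}ρ₄₂) + χ(βρ_{k1} − σ₁₂ρ_{k2})]/(βρ₄₁ − σ₁₂ρ₄₂)`
is injective on its domain `D = {β : βρ₄₁ − σ₁₂ρ₄₂ ≠ 0}` if and only if
`(ρ_{k2}ρ₄₁ − ρ_{k1}ρ₄₂)(ρ₃₂ρ₄₁ − χσ₁₂) ≠ 0`; moreover, if this product is zero then
`τ_{3k}` is constant on `D`. Here `s12 = σ₁₂`. -/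
theorem tau3k_invertible_iff (ρ31 ρ32 ρ41 ρ42 ρk1 ρk2 χ s12 : ℝ)
    (h : (ρ41, s12 * ρ42) ≠ (0, 0)) :
    let τ : ℝ → ℝ := fun β =>
      (ρ32 * (ρk2 * ρ41 - ρk1 * ρ42) + χ * (β * ρk1 - s12 * ρk2)) /
        (β * ρ41 - s12 * ρ42)
    let D : Set ℝ := {β | β * ρ41 - s12 * ρ42 ≠ 0}
    (Set.InjOn τ D ↔ (ρk2 * ρ41 - ρk1 * ρ42) * (ρ32 * ρ41 - χ * s12) ≠ 0) ∧
    ((ρk2 * ρ41 - ρk1 * ρ42) * (ρ32 * ρ41 - χ * s12) = 0 →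
      ∀ βh ∈ D, ∀ βt ∈ D, τ βh = τ βt) :=
  tau3k_invertible_iff_general ρ32 ρ41 ρ42 ρk1 ρk2 χ s12 h
end

section
/- Let ρ_{31}, ρ_{32}, ρ_{41}, ρ_{42}, ρ_{k1}, ρ_{k2}, χ, σ₁₂ be real numbers with (ρ_{31}, σ₁₂ρ_{32}) ≠ (0,0), and define τ_{4k}(β) := [ρ_{42}(ρ_{k2}ρ_{31} − ρ_{k1}ρ_{32}) + χ(βρ_{k1} − σ₁₂ρ_{k2})] / (βρ_{31} − σ₁₂ρ_{32}) on the domain D := {β ∈ ℝ : βρ_{31} − σ₁₂ρ_{32} ≠ 0}. Then τ_{4k} is injective on D if and only if (ρ_{k2}ρ_{31} − ρ_{k1}ρ_{32})(ρ_{31}ρ_{42} − χσ₁₂) ≠ 0. Moreover, if this product is zero, τ_{4k} is constant on D. (Proposition 1, second part: τ_{4k}(π,·) can be inverted for β if and only if (ρ_{k2}ρ_{31} − ρ_{k1}ρ_{32})(ρ_{31}ρ_{42} − χσ₁₂) ≠ 0.) -/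
/-!
Both the numerator and the denominator of `τ_{4k}` are affine in `β`, so `τ_{4k}` is a
linear fractional map `β ↦ (aβ + b)/(cβ + d)`. For two points of its domain, cross-multiplying
gives `(aβ₁ + b)(cβ₂ + d) − (aβ₂ + b)(cβ₁ + d) = (ad − bc)(β₁ − β₂)`, so the map is injective
when `ad − bc ≠ 0` and constant when `ad − bc = 0`; since the domain has at least two points,
a constant map is not injective. For `τ_{4k}` one computes
`ad − bc = −(ρ_{k2}ρ₃₁ − ρ_{k1}ρ₃₂)(ρ₃₁ρ₄₂ − χσ₁₂)`.
-/

open Set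

section LinearFractional

variable {K : Type*} [Field K]

def linFrac (a b c d : K) (x : K) : K := (a * x + b) / (c * x + d)

theorem linFrac_eq_linFrac_iff {a b c d x y : K} (hx : c * x + d ≠ 0) (hy : c * y + d ≠ 0) :
    linFrac a b c d x = linFrac a b c d y ↔ (a * d - b * c) * (x - y) = 0 := by
  rw [linFrac, linFrac, div_eq_div_iff hx hy, ← sub_eq_zero]
  constructor <;> intro h <;> linear_combination h

theorem linFrac_eq_of_det_eq_zero {a b c d : K} (hdet : a * d - b * c = 0) :
    ∀ x ∈ {x | c * x + d ≠ 0}, ∀ y ∈ {y | c * y + d ≠ 0},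
      linFrac a b c d x = linFrac a b c d y := fun _ hx _ hy =>
  (linFrac_eq_linFrac_iff hx hy).2 (by rw [hdet, zero_mul])

theorem subsingleton_setOf_affine_eq_zero {c d : K} (hcd : (c, d) ≠ (0, 0)) :
    {x | c * x + d = 0}.Subsingleton := by
  intro x (hx : c * x + d = 0) y (hy : c * y + d = 0)
  have hc : c ≠ 0 := by
    rintro rfl
    simp_all
  exact mul_left_cancel₀ hc (by linear_combination hx - hy)

theorem nontrivial_setOf_affine_ne_zero [Infinite K] {c d : K} (hcd : (c, d) ≠ (0, 0)) :
    {x | c * x + d ≠ 0}.Nontrivial :=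
  ((subsingleton_setOf_affine_eq_zero hcd).finite.infinite_compl).nontrivial

theorem injOn_linFrac_iff [Infinite K] {a b c d : K} (hcd : (c, d) ≠ (0, 0)) :
    InjOn (linFrac a b c d) {x | c * x + d ≠ 0} ↔ a * d - b * c ≠ 0 := by
  constructor
  · intro hinj hdet
    obtain ⟨x, hx, y, hy, hxy⟩ := nontrivial_setOf_affine_ne_zero hcd
    exact hxy (hinj hx hy (linFrac_eq_of_det_eq_zero hdet x hx y hy))
  · intro hdet x hx y hy hxy
    have := (linFrac_eq_linFrac_iff hx hy).1 hxy
    exact sub_eq_zero.1 ((mul_eq_zero.1 this).resolve_left hdet)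

end LinearFractional

theorem tau4k_invertible_iff_general (ρ31 ρ32 ρ42 ρk1 ρk2 χ s12 : ℝ)
    (h : (ρ31, s12 * ρ32) ≠ (0, 0)) :
    let τ : ℝ → ℝ := fun β =>
      (ρ42 * (ρk2 * ρ31 - ρk1 * ρ32) + χ * (β * ρk1 - s12 * ρk2)) /
        (β * ρ31 - s12 * ρ32)
    let D : Set ℝ := {β | β * ρ31 - s12 * ρ32 ≠ 0}
    (Set.InjOn τ D ↔ (ρk2 * ρ31 - ρk1 * ρ32) * (ρ31 * ρ42 - χ * s12) ≠ 0) ∧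
    ((ρk2 * ρ31 - ρk1 * ρ32) * (ρ31 * ρ42 - χ * s12) = 0 →
      ∀ βh ∈ D, ∀ βt ∈ D, τ βh = τ βt) := by
  intro τ D
  set a := χ * ρk1
  set b := ρ42 * (ρk2 * ρ31 - ρk1 * ρ32) - χ * s12 * ρk2
  set c := ρ31
  set d := -(s12 * ρ32)
  have hτ : τ = linFrac a b c d := by
    funext β
    simp only [τ, linFrac, a, b, c, d]
    congr 1 <;> ring
  have hD : D = {x | c * x + d ≠ 0} := by
    ext β
    simp only [D, c, d, mem_ofPred_eq]
    ring_nf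
  have hdet : a * d - b * c = -((ρk2 * ρ31 - ρk1 * ρ32) * (ρ31 * ρ42 - χ * s12)) := by
    simp only [a, b, c, d]
    ring
  have hcd : (c, d) ≠ (0, 0) := by
    simpa [c, d, Prod.ext_iff] using h
  rw [hτ, hD, injOn_linFrac_iff hcd, hdet, neg_ne_zero]
  refine ⟨Iff.rfl, fun hP => linFrac_eq_of_det_eq_zero ?_⟩
  rw [hdet, hP, neg_zero]

/-- Proposition 1, second part. With `(ρ₃₁, σ₁₂ρ₃₂) ≠ (0,0)`, the
reparameterized moment function
`τ_{4k}(β) = [ρ₄₂(ρ_{k2}ρ₃₁ − ρ_{k1}ρ₃₂) + χ(βρ_{k1} − σ₁₂ρ_{k2})]/(βρ₃₁ − σ₁₂ρ₃₂)`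
is injective on its domain `D = {β : βρ₃₁ − σ₁₂ρ₃₂ ≠ 0}` if and only if
`(ρ_{k2}ρ₃₁ − ρ_{k1}ρ₃₂)(ρ₃₁ρ₄₂ − χσ₁₂) ≠ 0`; moreover, if this product is zero then
`τ_{4k}` is constant on `D`. Here `s12 = σ₁₂`. -/
theorem tau4k_invertible_iff (ρ31 ρ32 ρ41 ρ42 ρk1 ρk2 χ s12 : ℝ)
    (h : (ρ31, s12 * ρ32) ≠ (0, 0)) :
    let τ : ℝ → ℝ := fun β =>
      (ρ42 * (ρk2 * ρ31 - ρk1 * ρ32) + χ * (β * ρk1 - s12 * ρk2)) /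
        (β * ρ31 - s12 * ρ32)
    let D : Set ℝ := {β | β * ρ31 - s12 * ρ32 ≠ 0}
    (Set.InjOn τ D ↔ (ρk2 * ρ31 - ρk1 * ρ32) * (ρ31 * ρ42 - χ * s12) ≠ 0) ∧
    ((ρk2 * ρ31 - ρk1 * ρ32) * (ρ31 * ρ42 - χ * s12) = 0 →
      ∀ βh ∈ D, ∀ βt ∈ D, τ βh = τ βt) :=
  tau4k_invertible_iff_general ρ31 ρ32 ρ42 ρk1 ρk2 χ s12 h
end

section
/- Let ρ_{31}, ρ_{32}, ρ_{41}, ρ_{42}, ρ_{j1}, ρ_{j2}, ρ_{k1}, ρ_{k2}, χ, σ₁₂ be real numbers with ρ_{31} ≠ 0 and ρ_{41} ≠ 0. Define q := ρ_{31}ρ_{41}ρ_{j2}ρ_{k2} − ρ_{32}ρ_{42}ρ_{j1}ρ_{k1}, r := ρ_{32}ρ_{42}ρ_{j1}ρ_{k2} + ρ_{32}ρ_{42}ρ_{j2}ρ_{k1} − ρ_{31}ρ_{42}ρ_{j2}ρ_{k2} − ρ_{32}ρ_{41}ρ_{j2}ρ_{k2}, and τ_{jk}(β) := [βq + σ₁₂r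 + χ(βρ_{k1} − σ₁₂ρ_{k2})(βρ_{j1} − σ₁₂ρ_{j2})] / [(βρ_{31} − σ₁₂ρ_{32})(βρ_{41} − σ₁₂ρ_{42})] on the domain D := {β ∈ ℝ : (βρ_{31} − σ₁₂ρ_{32})(βρ_{41} − σ₁₂ρ_{42}) ≠ 0}. Assume (ρ_{j2}ρ_{41} − ρ_{j1}ρ_{42})(ρ_{32}ρ_{41} − χσ₁₂) = 0 and (ρ_{k2}ρ_{31} − ρ_{k1}ρ_{32})(ρ_{31}ρ_{42} − χσ₁₂) = 0. Then τ_{jk} is injective on D if and only if (ρ_{j2}ρ_{41} − ρ_{j1}ρ_{42})(ρ_{k2}ρ_{31} − ρ_{k1}ρ_{32}) ≠ 0. (Proposition 1, third part.) -/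
/-!
Write `J = ρj2 ρ41 - ρj1 ρ42` and `K = ρk2 ρ31 - ρk1 ρ32`. Expanding the numerator in the factors
`β ρ31 - σ₁₂ ρ32`, `β ρ41 - σ₁₂ ρ42` of the denominator, the two side conditions kill every term except
`ρ31 ρ41 · numerator = χ ρj1 ρk1 · denominator + J K · ℓ(β)` with `ℓ` affine.
If `J K = 0`, `τ` is therefore constant on the infinite set `D`. If `J K ≠ 0`, the side conditions force
`ρ32 ρ41 = ρ31 ρ42 = χ σ₁₂`; then with `m(β) = ρ31 ρ41 β - χ σ₁₂²` we get `ℓ = m`,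
`ρ31 ρ41 · denominator = m²`, and `τ = χ ρj1 ρk1 / (ρ31 ρ41) + J K / m`, which is injective.
-/

open Set

theorem infinite_setOf_mul_sub_mul_mul_sub_ne_zero {K : Type*} [Field K] [Infinite K] {a c : K}
    (ha : a ≠ 0) (hc : c ≠ 0) (b d : K) :
    {x : K | (x * a - b) * (x * c - d) ≠ 0}.Infinite := by
  have hroots : {x : K | (x * a - b) * (x * c - d) ≠ 0}ᶜ ⊆ {b / a, d / c} := by
    intro x hx
    simp only [mem_compl_iff, mem_ofPred_eq, not_not, mul_eq_zero, sub_eq_zero] at hx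
    rcases hx with hx | hx
    · exact Or.inl (eq_div_of_mul_eq ha hx)
    · exact Or.inr (eq_div_of_mul_eq hc hx)
  simpa using ((toFinite _).subset hroots).infinite_compl

theorem Set.Nontrivial.not_injOn_of_eqOn_const {α β : Type*} {s : Set α} {f : α → β} {c : β}
    (hs : s.Nontrivial) (hf : EqOn f (fun _ ↦ c) s) : ¬ InjOn f s := by
  obtain ⟨x, hx, y, hy, hxy⟩ := hs
  exact fun hinj ↦ hxy (hinj hx hy (by rw [hf hx, hf hy]))

theorem injOn_const_add_div_mul_sub {K : Type*} [Field K] {a e : K} (ha : a ≠ 0) (he : e ≠ 0)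
    (b c : K) : InjOn (fun x ↦ c + e / (a * x - b)) {x | a * x - b ≠ 0} := by
  intro x hx y hy hxy
  have h := add_left_cancel hxy
  rw [div_eq_div_iff hx hy, mul_right_inj' he] at h
  exact mul_left_cancel₀ ha (by linear_combination -h)

section
variable {R : Type*} [CommRing R] {ρ31 ρ32 ρ41 ρ42 ρj1 ρj2 ρk1 ρk2 χ s12 q r : R}

theorem mul_taujk_numerator_eq
    (hq : q = ρ31 * ρ41 * ρj2 * ρk2 - ρ32 * ρ42 * ρj1 * ρk1)
    (hr : r = ρ32 * ρ42 * ρj1 * ρk2 + ρ32 * ρ42 * ρj2 * ρk1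
              - ρ31 * ρ42 * ρj2 * ρk2 - ρ32 * ρ41 * ρj2 * ρk2)
    (hs1 : (ρj2 * ρ41 - ρj1 * ρ42) * (ρ32 * ρ41 - χ * s12) = 0)
    (hs2 : (ρk2 * ρ31 - ρk1 * ρ32) * (ρ31 * ρ42 - χ * s12) = 0) (β : R) :
    ρ31 * ρ41 * (β * q + s12 * r + χ * (β * ρk1 - s12 * ρk2) * (β * ρj1 - s12 * ρj2)) =
      χ * ρj1 * ρk1 * ((β * ρ31 - s12 * ρ32) * (β * ρ41 - s12 * ρ42)) +
        (ρj2 * ρ41 - ρj1 * ρ42) * (ρk2 * ρ31 - ρk1 * ρ32) *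
          (ρ31 * ρ41 * β - s12 * (ρ32 * ρ41 + ρ31 * ρ42) + χ * s12 ^ 2) := by
  subst hq hr
  linear_combination ρk1 * (β * ρ31 - s12 * ρ32) * hs1 + ρj1 * (β * ρ41 - s12 * ρ42) * hs2

theorem mul_taujk_denominator_eq (hb : ρ32 * ρ41 = χ * s12) (hd : ρ31 * ρ42 = χ * s12) (β : R) :
    ρ31 * ρ41 * ((β * ρ31 - s12 * ρ32) * (β * ρ41 - s12 * ρ42)) =
      (ρ31 * ρ41 * β - χ * s12 ^ 2) ^ 2 := by
  linear_combination (s12 ^ 2 * (ρ31 * ρ42 - χ * s12) - s12 * (ρ31 * ρ41 * β - χ * s12 ^ 2)) * hb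
    - s12 * (ρ31 * ρ41 * β - χ * s12 ^ 2) * hd

end

section
variable {K : Type*} [Field K] {ρ31 ρ32 ρ41 ρ42 ρj1 ρj2 ρk1 ρk2 χ s12 q r : K}

theorem taujk_eq_const_of_mul_eq_zero (h31 : ρ31 ≠ 0) (h41 : ρ41 ≠ 0)
    (hq : q = ρ31 * ρ41 * ρj2 * ρk2 - ρ32 * ρ42 * ρj1 * ρk1)
    (hr : r = ρ32 * ρ42 * ρj1 * ρk2 + ρ32 * ρ42 * ρj2 * ρk1
              - ρ31 * ρ42 * ρj2 * ρk2 - ρ32 * ρ41 * ρj2 * ρk2)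
    (hs1 : (ρj2 * ρ41 - ρj1 * ρ42) * (ρ32 * ρ41 - χ * s12) = 0)
    (hs2 : (ρk2 * ρ31 - ρk1 * ρ32) * (ρ31 * ρ42 - χ * s12) = 0)
    (hJK : (ρj2 * ρ41 - ρj1 * ρ42) * (ρk2 * ρ31 - ρk1 * ρ32) = 0) {β : K}
    (hβ : (β * ρ31 - s12 * ρ32) * (β * ρ41 - s12 * ρ42) ≠ 0) :
    (β * q + s12 * r + χ * (β * ρk1 - s12 * ρk2) * (β * ρj1 - s12 * ρj2)) /
        ((β * ρ31 - s12 * ρ32) * (β * ρ41 - s12 * ρ42)) = χ * ρj1 * ρk1 / (ρ31 * ρ41) := by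
  rw [div_eq_div_iff hβ (mul_ne_zero h31 h41)]
  linear_combination mul_taujk_numerator_eq hq hr hs1 hs2 β +
    (ρ31 * ρ41 * β - s12 * (ρ32 * ρ41 + ρ31 * ρ42) + χ * s12 ^ 2) * hJK

theorem taujk_eq_const_add_div (h31 : ρ31 ≠ 0) (h41 : ρ41 ≠ 0)
    (hq : q = ρ31 * ρ41 * ρj2 * ρk2 - ρ32 * ρ42 * ρj1 * ρk1)
    (hr : r = ρ32 * ρ42 * ρj1 * ρk2 + ρ32 * ρ42 * ρj2 * ρk1
              - ρ31 * ρ42 * ρj2 * ρk2 - ρ32 * ρ41 * ρj2 * ρk2)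
    (hb : ρ32 * ρ41 = χ * s12) (hd : ρ31 * ρ42 = χ * s12) {β : K}
    (hm : ρ31 * ρ41 * β - χ * s12 ^ 2 ≠ 0) :
    (β * q + s12 * r + χ * (β * ρk1 - s12 * ρk2) * (β * ρj1 - s12 * ρj2)) /
        ((β * ρ31 - s12 * ρ32) * (β * ρ41 - s12 * ρ42)) =
      χ * ρj1 * ρk1 / (ρ31 * ρ41) +
        (ρj2 * ρ41 - ρj1 * ρ42) * (ρk2 * ρ31 - ρk1 * ρ32) / (ρ31 * ρ41 * β - χ * s12 ^ 2) := by
  have hden := mul_taujk_denominator_eq hb hd β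
  have hβ : (β * ρ31 - s12 * ρ32) * (β * ρ41 - s12 * ρ42) ≠ 0 :=
    right_ne_zero_of_mul (hden ▸ pow_ne_zero 2 hm)
  rw [div_add_div _ _ (mul_ne_zero h31 h41) hm, div_eq_div_iff hβ (by positivity)]
  linear_combination (ρ31 * ρ41 * β - χ * s12 ^ 2) *
      mul_taujk_numerator_eq hq hr (mul_eq_zero_of_right _ (sub_eq_zero.mpr hb))
        (mul_eq_zero_of_right _ (sub_eq_zero.mpr hd)) β -
    (ρj2 * ρ41 - ρj1 * ρ42) * (ρk2 * ρ31 - ρk1 * ρ32) *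
      (hden + s12 * (ρ31 * ρ41 * β - χ * s12 ^ 2) * (hb + hd))

end

/-- Proposition 1, third part. With `ρ₃₁ ≠ 0`, `ρ₄₁ ≠ 0`,
`q = ρ₃₁ρ₄₁ρ_{j2}ρ_{k2} − ρ₃₂ρ₄₂ρ_{j1}ρ_{k1}`,
`r = ρ₃₂ρ₄₂ρ_{j1}ρ_{k2} + ρ₃₂ρ₄₂ρ_{j2}ρ_{k1} − ρ₃₁ρ₄₂ρ_{j2}ρ_{k2} − ρ₃₂ρ₄₁ρ_{j2}ρ_{k2}`,
and assuming `(ρ_{j2}ρ₄₁ − ρ_{j1}ρ₄₂)(ρ₃₂ρ₄₁ − χσ₁₂) = 0` and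
`(ρ_{k2}ρ₃₁ − ρ_{k1}ρ₃₂)(ρ₃₁ρ₄₂ − χσ₁₂) = 0`, the function
`τ_{jk}(β) = [βq + σ₁₂r + χ(βρ_{k1} − σ₁₂ρ_{k2})(βρ_{j1} − σ₁₂ρ_{j2})] /
[(βρ₃₁ − σ₁₂ρ₃₂)(βρ₄₁ − σ₁₂ρ₄₂)]` is injective on its domain
`D = {β : (βρ₃₁ − σ₁₂ρ₃₂)(βρ₄₁ − σ₁₂ρ₄₂) ≠ 0}` if and only if
`(ρ_{j2}ρ₄₁ − ρ_{j1}ρ₄₂)(ρ_{k2}ρ₃₁ − ρ_{k1}ρ₃₂) ≠ 0`. Here `s12 = σ₁₂`. -/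
theorem taujk_invertible_iff (ρ31 ρ32 ρ41 ρ42 ρj1 ρj2 ρk1 ρk2 χ s12 q r : ℝ)
    (h31 : ρ31 ≠ 0) (h41 : ρ41 ≠ 0)
    (hq : q = ρ31 * ρ41 * ρj2 * ρk2 - ρ32 * ρ42 * ρj1 * ρk1)
    (hr : r = ρ32 * ρ42 * ρj1 * ρk2 + ρ32 * ρ42 * ρj2 * ρk1
              - ρ31 * ρ42 * ρj2 * ρk2 - ρ32 * ρ41 * ρj2 * ρk2)
    (hs1 : (ρj2 * ρ41 - ρj1 * ρ42) * (ρ32 * ρ41 - χ * s12) = 0)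
    (hs2 : (ρk2 * ρ31 - ρk1 * ρ32) * (ρ31 * ρ42 - χ * s12) = 0) :
    let τ : ℝ → ℝ := fun β =>
      (β * q + s12 * r + χ * (β * ρk1 - s12 * ρk2) * (β * ρj1 - s12 * ρj2)) /
        ((β * ρ31 - s12 * ρ32) * (β * ρ41 - s12 * ρ42))
    let D : Set ℝ := {β | (β * ρ31 - s12 * ρ32) * (β * ρ41 - s12 * ρ42) ≠ 0}
    Set.InjOn τ D ↔ (ρj2 * ρ41 - ρj1 * ρ42) * (ρk2 * ρ31 - ρk1 * ρ32) ≠ 0 := by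
  intro τ D
  constructor
  · intro hinj hJK
    exact (infinite_setOf_mul_sub_mul_mul_sub_ne_zero h31 h41 _ _).nontrivial.not_injOn_of_eqOn_const
      (fun β hβ ↦ taujk_eq_const_of_mul_eq_zero h31 h41 hq hr hs1 hs2 hJK hβ) hinj
  · intro hJK
    have hb : ρ32 * ρ41 = χ * s12 :=
      sub_eq_zero.mp ((mul_eq_zero.mp hs1).resolve_left (left_ne_zero_of_mul hJK))
    have hd : ρ31 * ρ42 = χ * s12 :=
      sub_eq_zero.mp ((mul_eq_zero.mp hs2).resolve_left (right_ne_zero_of_mul hJK))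
    have hDm : D ⊆ {β | ρ31 * ρ41 * β - χ * s12 ^ 2 ≠ 0} := fun β hβ hm ↦
      hβ (by simpa [hm, h31, h41] using mul_taujk_denominator_eq hb hd β)
    exact ((injOn_const_add_div_mul_sub (mul_ne_zero h31 h41) hJK _ _).mono hDm).congr
      fun β hβ ↦ (taujk_eq_const_add_div h31 h41 hq hr hb hd (hDm hβ)).symm
end
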